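/- arXiv:2509.01377 — 2 statements merged into one kernel-verified Lean document; each statement's English description precedes it below -/
import Mathlib

section
/- Let U ⊆ ℝ be an open interval and let f₀, f₁, ..., f_n : U → ℝ be linearly independent real-analytic functions, and suppose there exists an index j, 0 ≤ j ≤ n, such that f_j has constant sign on U (either f_j(x) > 0 for all x ∈ U, or f_j(x) < 0 for all x ∈ U). Then there exist real constants C₀, ..., C_n such that the function f = Σ_{i=0}^{n} C_i f_i has at least n simple zeros in U, i.e., at least n points x ∈ U with f(x) = 0 and f'(x) ≠ 0. -/
/-!
For points `t 0, …, t (n-1)`, the combination `F y = det [f y; f (t 0); …; f (t (n-1))]`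
(rows `f y = (f₀ y, …, fₙ y)`) vanishes at every `t k`, and `F' (t k)` is the determinant with
first row `f' (t k)`. These determinants are analytic in `t` on the connected set `Uⁿ`, so by the
identity theorem they have a common non-zero as soon as none of them vanishes identically.
For that, take `x` with `f x` and `f' x` linearly independent (otherwise every Wronskian
`fᵢ' f_j - fᵢ f_j'` vanishes and `fᵢ / f_j` is constant) and complete the pair to a basis by vectors
`f y`, `y ∈ U`: these span, because the `fᵢ` are linearly independent.
-/

open Set

theorem span_image_eval_eq_top {K ι α : Type*} [Field K] [Fintype ι] {f : ι → α → K}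
    {U : Set α} (hf : ∀ c : ι → K, (∀ x ∈ U, ∑ i, c i * f i x = 0) → ∀ i, c i = 0) :
    Submodule.span K ((fun x i => f i x) '' U) = ⊤ := by
  classical
  by_contra hne
  obtain ⟨φ, hφ, hφU⟩ := Submodule.exists_dual_map_eq_bot_of_lt_top (lt_top_iff_ne_top.2 hne)
    inferInstance
  have hφ_apply (v : ι → K) : φ v = ∑ i, φ (Pi.single i 1) * v i := by
    rw [LinearMap.pi_apply_eq_sum_univ φ v]
    exact Finset.sum_congr rfl fun i _ => by
      rw [smul_eq_mul, mul_comm]; congr; ext j; simp [Pi.single_apply, eq_comm]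
  have hvanish : ∀ x ∈ U, ∑ i, φ (Pi.single i 1) * f i x = 0 := fun x hx => by
    rw [← hφ_apply]
    exact (Submodule.mem_bot K).1
      (hφU ▸ Submodule.mem_map_of_mem (Submodule.subset_span (mem_image_of_mem _ hx)))
  refine hφ (LinearMap.ext fun v => ?_)
  simp [hφ_apply v, hf _ hvanish]

theorem exists_eq_const_mul_of_deriv_mul_eq {𝕜 : Type*} [RCLike 𝕜] {U : Set 𝕜} (hU : IsOpen U)
    (hU' : IsPreconnected U) {g h : 𝕜 → 𝕜} (hg : DifferentiableOn 𝕜 g U)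
    (hh : DifferentiableOn 𝕜 h U) (h₀ : ∀ x ∈ U, h x ≠ 0)
    (hW : ∀ x ∈ U, deriv g x * h x = g x * deriv h x) : ∃ c, ∀ x ∈ U, g x = c * h x := by
  have hquot : EqOn (deriv (g / h)) 0 U := fun x hx => by
    rw [Pi.zero_apply, deriv_div ((hg x hx).differentiableAt (hU.mem_nhds hx))
      ((hh x hx).differentiableAt (hU.mem_nhds hx)) (h₀ x hx), hW x hx, sub_self, zero_div]
  obtain ⟨c, hc⟩ := hU.exists_is_const_of_deriv_eq_zero hU' (hg.div hh h₀) hquot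
  exact ⟨c, fun x hx => (div_eq_iff (h₀ x hx)).1 (hc x hx)⟩

theorem exists_linearIndependent_eval_deriv {𝕜 ι : Type*} [RCLike 𝕜] [Fintype ι] [Nontrivial ι]
    {f : ι → 𝕜 → 𝕜} {U : Set 𝕜} (hU : IsOpen U) (hU' : IsPreconnected U)
    (hf : ∀ i, DifferentiableOn 𝕜 (f i) U)
    (hli : ∀ c : ι → 𝕜, (∀ x ∈ U, ∑ i, c i * f i x = 0) → ∀ i, c i = 0)
    {j : ι} (hj : ∀ x ∈ U, f j x ≠ 0) :
    ∃ x ∈ U, LinearIndependent 𝕜 ![fun c => f c x, fun c => deriv (f c) x] := by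
  classical
  obtain ⟨i, hij⟩ := exists_ne j
  by_contra! hdep
  have hW : ∀ x ∈ U, deriv (f i) x * f j x = f i x * deriv (f j) x := fun x hx => by
    have hx0 : (fun c => f c x) ≠ 0 := fun h => hj x hx (congr_fun h j)
    obtain ⟨a, ha⟩ : ∃ a : 𝕜, a • (fun c => f c x) = fun c => deriv (f c) x := by
      simpa [LinearIndependent.pair_iff' hx0] using hdep x hx
    rw [← congr_fun ha i, ← congr_fun ha j]
    simp only [Pi.smul_apply, smul_eq_mul]
    ring
  obtain ⟨c, hc⟩ := exists_eq_const_mul_of_deriv_mul_eq hU hU' (hf i) (hf j) hj hW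
  have := hli (Pi.single i 1 - Pi.single j c) (fun x hx => by
    simp [sub_mul, Finset.sum_sub_distrib, Pi.single_apply, hc x hx]) i
  simp [hij] at this

theorem exists_linearIndependent_cons_cons_comp {K V α : Type*} [Field K] [AddCommGroup V]
    [Module K V] [FiniteDimensional K V] {γ : α → V} {U : Set α}
    (hU : Submodule.span K (γ '' U) = ⊤) {a b : V} (hab : LinearIndependent K ![a, b]) :
    ∀ m, m + 2 ≤ Module.finrank K V →
      ∃ s : Fin m → α, (∀ i, s i ∈ U) ∧ LinearIndependent K (Fin.cons a (Fin.cons b (γ ∘ s)))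
  | 0, _ => ⟨Fin.elim0, fun i => i.elim0, by convert hab; ext i; fin_cases i <;> rfl⟩
  | m + 1, hm => by
    obtain ⟨s, hsU, hs⟩ := exists_linearIndependent_cons_cons_comp hU hab m (by omega)
    have hlt : Submodule.span K (range (Fin.cons a (Fin.cons b (γ ∘ s)))) ≠ ⊤ := fun htop => by
      have := finrank_span_eq_card hs
      rw [htop, finrank_top, Fintype.card_fin] at this
      omega
    obtain ⟨y, hyU, hy⟩ :
        ∃ y ∈ U, γ y ∉ Submodule.span K (range (Fin.cons a (Fin.cons b (γ ∘ s)))) := by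
      by_contra! h
      refine hlt (eq_top_iff.2 (hU ▸ Submodule.span_le.2 ?_))
      rintro _ ⟨y, hy, rfl⟩
      exact h y hy
    refine ⟨Fin.snoc s y, Fin.lastCases (by simpa using hyU) (by simpa using hsU), ?_⟩
    rw [Fin.comp_snoc, Fin.cons_snoc_eq_snoc_cons b, Fin.cons_snoc_eq_snoc_cons a]
    exact linearIndependent_finSnoc.2 ⟨hs, hy⟩

theorem exists_linearIndependent_cons_comp_of_apply_eq {K V α : Type*} [Field K] [AddCommGroup V]
    [Module K V] [FiniteDimensional K V] {γ : α → V} {U : Set α}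
    (hU : Submodule.span K (γ '' U) = ⊤) {n : ℕ} (hn : n + 1 = Module.finrank K V) {a : V}
    {x : α} (hx : x ∈ U) (hax : LinearIndependent K ![a, γ x]) (k : Fin n) :
    ∃ t : Fin n → α, (∀ i, t i ∈ U) ∧ t k = x ∧ LinearIndependent K (Fin.cons a (γ ∘ t)) := by
  obtain ⟨m, rfl⟩ := Nat.exists_eq_succ_of_ne_zero k.pos.ne'
  obtain ⟨s, hsU, hs⟩ := exists_linearIndependent_cons_cons_comp hU hax m (by omega)
  have hxsU : ∀ i, (Fin.cons x s : Fin (m + 1) → α) i ∈ U := Fin.forall_fin_succ.2 ⟨hx, hsU⟩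
  refine ⟨Fin.cons x s ∘ Equiv.swap 0 k, fun i => hxsU _, by simp, ?_⟩
  rw [← Function.comp_assoc, Fin.comp_cons, linearIndependent_finCons, linearIndependent_equiv,
    EquivLike.range_comp]
  exact linearIndependent_finCons.1 hs

theorem AnalyticAt.matrix_det {𝕜 E n : Type*} [NontriviallyNormedField 𝕜] [NormedAddCommGroup E]
    [NormedSpace 𝕜 E] [Fintype n] [DecidableEq n] {M : E → Matrix n n 𝕜} {z : E}
    (hM : ∀ i j, AnalyticAt 𝕜 (fun w => M w i j) z) : AnalyticAt 𝕜 (fun w => (M w).det) z := by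
  simp only [Matrix.det_apply, Units.smul_def, zsmul_eq_mul]
  fun_prop

theorem AnalyticOnNhd.exists_mul_ne_zero {𝕜 E : Type*} [NontriviallyNormedField 𝕜]
    [NormedAddCommGroup E] [NormedSpace 𝕜 E] {U : Set E} (hU : IsOpen U) (hU' : IsPreconnected U)
    {g h : E → 𝕜} (hg : AnalyticOnNhd 𝕜 g U) (hh : AnalyticOnNhd 𝕜 h U)
    (hg₀ : ∃ z ∈ U, g z ≠ 0) (hh₀ : ∃ z ∈ U, h z ≠ 0) : ∃ z ∈ U, g z * h z ≠ 0 := by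
  obtain ⟨z₀, hz₀, hgz₀⟩ := hg₀
  obtain ⟨z₁, hz₁, hhz₁⟩ := hh₀
  by_contra! hgh
  refine hhz₁ (hh.eqOn_zero_of_preconnected_of_eventuallyEq_zero hU' hz₀ ?_ hz₁)
  filter_upwards [hU.mem_nhds hz₀, (hg z₀ hz₀).continuousAt.eventually_ne hgz₀] with z hz hgz
  exact (mul_eq_zero.1 (hgh z hz)).resolve_left hgz

theorem AnalyticOnNhd.exists_prod_ne_zero {𝕜 E ι : Type*} [NontriviallyNormedField 𝕜]
    [NormedAddCommGroup E] [NormedSpace 𝕜 E] {U : Set E} (hU : IsOpen U) (hU' : IsPreconnected U)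
    (hU₀ : U.Nonempty) (s : Finset ι) {g : ι → E → 𝕜} (hg : ∀ i ∈ s, AnalyticOnNhd 𝕜 (g i) U)
    (hg₀ : ∀ i ∈ s, ∃ z ∈ U, g i z ≠ 0) : ∃ z ∈ U, ∏ i ∈ s, g i z ≠ 0 := by
  classical
  induction s using Finset.induction_on with
  | empty => exact hU₀.imp fun z hz => ⟨hz, by simp⟩
  | insert a s ha ih =>
    simp only [Finset.prod_insert ha]
    exact (hg a (s.mem_insert_self a)).exists_mul_ne_zero hU hU'
      (Finset.analyticOnNhd_fun_prod _ fun i hi => hg i (Finset.mem_insert_of_mem hi))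
      (hg₀ a (s.mem_insert_self a))
      (ih (fun i hi => hg i (Finset.mem_insert_of_mem hi))
        fun i hi => hg₀ i (Finset.mem_insert_of_mem hi))

theorem Matrix.det_of_cons {R : Type*} [CommRing R] {n : ℕ} (v : Fin (n + 1) → R)
    (A : Fin n → Fin (n + 1) → R) :
    (Matrix.of (Fin.cons v A)).det =
      ∑ j : Fin (n + 1), (-1) ^ (j : ℕ) * ((Matrix.of A).submatrix id j.succAbove).det * v j := by
  rw [Matrix.det_succ_row_zero]
  exact Finset.sum_congr rfl fun j _ => mul_right_comm _ _ _

section CofactorCombination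

variable {n : ℕ}

noncomputable def cofactorCoeffs {R α : Type*} [CommRing R] (f : Fin (n + 1) → α → R)
    (t : Fin n → α) (c : Fin (n + 1)) : R :=
  (-1) ^ (c : ℕ) * ((Matrix.of fun i c => f c (t i)).submatrix id c.succAbove).det

noncomputable def derivRowDet {𝕜 : Type*} [NontriviallyNormedField 𝕜] (f : Fin (n + 1) → 𝕜 → 𝕜)
    (t : Fin n → 𝕜) (k : Fin n) : 𝕜 :=
  (Matrix.of (Fin.cons (fun c => deriv (f c) (t k)) fun i c => f c (t i))).det

theorem sum_cofactorCoeffs_mul {R α : Type*} [CommRing R] (f : Fin (n + 1) → α → R)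
    (t : Fin n → α) (v : Fin (n + 1) → R) :
    ∑ c, cofactorCoeffs f t c * v c = (Matrix.of (Fin.cons v fun i c => f c (t i))).det :=
  (Matrix.det_of_cons v _).symm

theorem sum_cofactorCoeffs_mul_apply {R α : Type*} [CommRing R] (f : Fin (n + 1) → α → R)
    (t : Fin n → α) (k : Fin n) : ∑ c, cofactorCoeffs f t c * f c (t k) = 0 := by
  rw [sum_cofactorCoeffs_mul f t fun c => f c (t k)]
  exact Matrix.det_zero_of_row_eq (Fin.succ_ne_zero k).symm rfl

theorem deriv_sum_cofactorCoeffs_mul {𝕜 : Type*} [NontriviallyNormedField 𝕜]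
    {f : Fin (n + 1) → 𝕜 → 𝕜} (t : Fin n → 𝕜) (k : Fin n)
    (hf : ∀ c, DifferentiableAt 𝕜 (f c) (t k)) :
    deriv (fun y => ∑ c, cofactorCoeffs f t c * f c y) (t k) = derivRowDet f t k := by
  rw [deriv_fun_sum fun c _ => (hf c).const_mul _]
  simp only [deriv_const_mul _ (hf _)]
  exact sum_cofactorCoeffs_mul f t _

theorem injective_of_derivRowDet_ne_zero {𝕜 : Type*} [NontriviallyNormedField 𝕜]
    {f : Fin (n + 1) → 𝕜 → 𝕜} {t : Fin n → 𝕜} (ht : ∀ k, derivRowDet f t k ≠ 0) :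
    Function.Injective t := fun i i' hii' => by
  by_contra hne
  exact ht i (Matrix.det_zero_of_row_eq (Fin.succ_injective _ |>.ne hne)
    (congrArg (fun y c => f c y) hii'))

theorem analyticOnNhd_derivRowDet {𝕜 : Type*} [NontriviallyNormedField 𝕜] [CompleteSpace 𝕜]
    {f : Fin (n + 1) → 𝕜 → 𝕜} {U : Set 𝕜} (hf : ∀ c, AnalyticOnNhd 𝕜 (f c) U) (k : Fin n) :
    AnalyticOnNhd 𝕜 (fun t => derivRowDet f t k) (univ.pi fun _ => U) := by
  intro t ht
  refine AnalyticAt.matrix_det fun r c => ?_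
  cases r using Fin.cases with
  | zero =>
    exact ((hf c).deriv _ (ht k trivial)).comp (f := fun w : Fin n → 𝕜 => w k)
      (analyticAt_pi_iff.1 analyticAt_id k)
  | succ i =>
    exact (hf c _ (ht i trivial)).comp (f := fun w : Fin n → 𝕜 => w i)
      (analyticAt_pi_iff.1 analyticAt_id i)

theorem exists_derivRowDet_ne_zero {𝕜 : Type*} [RCLike 𝕜] {f : Fin (n + 1) → 𝕜 → 𝕜}
    {U : Set 𝕜} (hU : IsOpen U) (hU' : IsPreconnected U) (hf : ∀ c, DifferentiableOn 𝕜 (f c) U)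
    (hli : ∀ c : Fin (n + 1) → 𝕜, (∀ x ∈ U, ∑ i, c i * f i x = 0) → ∀ i, c i = 0)
    {j : Fin (n + 1)} (hj : ∀ x ∈ U, f j x ≠ 0) (k : Fin n) :
    ∃ t ∈ univ.pi fun _ => U, derivRowDet f t k ≠ 0 := by
  have : Nontrivial (Fin (n + 1)) := Fin.nontrivial_iff_two_le.2 (by have := k.pos; omega)
  obtain ⟨x, hx, hpair⟩ := exists_linearIndependent_eval_deriv hU hU' hf hli hj
  obtain ⟨t, htU, rfl, ht⟩ := exists_linearIndependent_cons_comp_of_apply_eq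
    (span_image_eval_eq_top hli) (by simp) hx (LinearIndependent.pair_symm_iff.1 hpair) k
  exact ⟨t, fun i _ => htU i,
    ((Matrix.isUnit_iff_isUnit_det _).1 (Matrix.linearIndependent_rows_iff_isUnit.1 ht)).ne_zero⟩

end CofactorCombination

/-- Given `n+1` linearly independent real-analytic functions `f₀, …, f_n` on an open
interval `U`, one of which has constant sign on `U`, there are constants `C₀, …, C_n`
such that `f = ∑ Cᵢ fᵢ` has at least `n` simple zeros in `U`. -/
theorem exists_combination_with_simple_zeros (n : ℕ) (U : Set ℝ)
    (hUopen : IsOpen U) (hUconn : U.OrdConnected)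
    (f : Fin (n + 1) → ℝ → ℝ) (han : ∀ i, AnalyticOnNhd ℝ (f i) U)
    (hli : ∀ c : Fin (n + 1) → ℝ, (∀ x ∈ U, ∑ i, c i * f i x = 0) → ∀ i, c i = 0)
    (j : Fin (n + 1)) (hsign : (∀ x ∈ U, 0 < f j x) ∨ (∀ x ∈ U, f j x < 0)) :
    ∃ C : Fin (n + 1) → ℝ, ∃ x : Fin n → ℝ, Function.Injective x ∧
      ∀ k, x k ∈ U ∧ (∑ i, C i * f i (x k)) = 0 ∧
        deriv (fun y => ∑ i, C i * f i y) (x k) ≠ 0 := by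
  have hU : IsPreconnected U := hUconn.isPreconnected
  have hU₀ : U.Nonempty := by
    by_contra h
    simpa using hli 1 (fun x hx => (h ⟨x, hx⟩).elim) 0
  have hj : ∀ x ∈ U, f j x ≠ 0 := hsign.elim (fun h x hx => (h x hx).ne') fun h x hx => (h x hx).ne
  obtain ⟨t, htU, ht⟩ := AnalyticOnNhd.exists_prod_ne_zero
    (isOpen_set_pi finite_univ fun _ _ => hUopen) (isPreconnected_univ_pi fun _ => hU)
    (univ_pi_nonempty_iff.2 fun _ => hU₀) Finset.univ
    (fun k _ => analyticOnNhd_derivRowDet han k)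
    fun k _ => exists_derivRowDet_ne_zero hUopen hU (fun c => (han c).differentiableOn) hli hj k
  replace ht : ∀ k, derivRowDet f t k ≠ 0 := fun k => Finset.prod_ne_zero_iff.1 ht k (by simp)
  refine ⟨cofactorCoeffs f t, t, injective_of_derivRowDet_ne_zero ht, fun k =>
    ⟨htU k trivial, sum_cofactorCoeffs_mul_apply f t k, ?_⟩⟩
  rw [deriv_sum_cofactorCoeffs_mul t k fun c => (han c _ (htU k trivial)).differentiableAt]
  exact ht k
end

section
/- For r > 1 set θ_r = arcsin(1/r), and define f₁(r) = r³ cos(θ_r), f₂(r) = r²(π + 2θ_r), f₃(r) = r²(π − 2θ_r), f₄(r) = r cos(θ_r), f₅(r) = sin(2θ_r). Then the functions f₁, f₂, f₃, f₄, f₅ are linearly independent on the interval (1, 3). -/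
/-! Substituting `r = 1 / sin θ` (so that `θ = θᵣ`) and multiplying by `sin² θ` turns `∑ cᵢ fᵢ`
into `c₀ cot θ + (c₁ + c₂) π + 2 (c₁ - c₂) θ + c₃ sin θ cos θ + 2 c₄ sin³ θ cos θ`. Its derivative
is a cubic polynomial in `sin² θ` divided by `sin² θ`, and that derivative vanishes on an interval,
so the cubic is zero; its coefficients are `-c₀`, `2 (c₁ - c₂) + c₃`, `6 c₄ - 2 c₃` and `-8 c₄`.
What is left of the combination is the constant `(c₁ + c₂) π`. -/

open Real

noncomputable def fTeoC : Fin 5 → ℝ → ℝ :=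
  ![fun r => r ^ 3 * Real.cos (Real.arcsin (1 / r)),
    fun r => r ^ 2 * (Real.pi + 2 * Real.arcsin (1 / r)),
    fun r => r ^ 2 * (Real.pi - 2 * Real.arcsin (1 / r)),
    fun r => r * Real.cos (Real.arcsin (1 / r)),
    fun r => Real.sin (2 * Real.arcsin (1 / r))]

open Polynomial in
theorem even_sextic_coeffs_eq_zero {R : Type*} [CommRing R] [IsDomain R] {s : Set R}
    (hs : s.Infinite) {a b c d : R}
    (h : ∀ u ∈ s, a + b * u ^ 2 + c * u ^ 4 + d * u ^ 6 = 0) :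
    a = 0 ∧ b = 0 ∧ c = 0 ∧ d = 0 := by
  set p : R[X] := C a + C b * X ^ 2 + C c * X ^ 4 + C d * X ^ 6
  have hp : p = 0 :=
    p.eq_zero_of_infinite_isRoot <| hs.mono fun u hu => by simpa [p] using h u hu
  have hcoeff (n : ℕ) := congrArg (coeff · n) hp
  exact ⟨by simpa [p] using hcoeff 0, by simpa [p] using hcoeff 2, by simpa [p] using hcoeff 4,
    by simpa [p] using hcoeff 6⟩

theorem sin_mem_Ioo_of_mem_Ioo_arcsin {a θ : ℝ} (hθ : θ ∈ Set.Ioo (arcsin a) (π / 2)) :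
    sin θ ∈ Set.Ioo a 1 := by
  have hθ' : -(π / 2) < θ := (neg_pi_div_two_le_arcsin a).trans_lt hθ.1
  refine ⟨(arcsin_lt_iff_lt_sin' ⟨hθ', hθ.2.le⟩).1 hθ.1, ?_⟩
  simpa using sin_lt_sin_of_lt_of_le_pi_div_two hθ'.le le_rfl hθ.2

theorem arcsin_mem_Ioo_arcsin {a u : ℝ} (ha : -1 ≤ a) (hu : u ∈ Set.Ioo a 1) :
    arcsin u ∈ Set.Ioo (arcsin a) (π / 2) :=
  ⟨arcsin_lt_arcsin ha hu.1 hu.2.le, arcsin_lt_pi_div_two.2 hu.2⟩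

noncomputable def fTeoCAngle (c : Fin 5 → ℝ) (θ : ℝ) : ℝ :=
  c 0 * (cos θ / sin θ) + c 1 * (π + 2 * θ) + c 2 * (π - 2 * θ) + c 3 * (sin θ * cos θ)
    + c 4 * (2 * sin θ ^ 3 * cos θ)

theorem sin_sq_mul_sum_fTeoC_one_div_sin (c : Fin 5 → ℝ) {θ : ℝ} (h₁ : -(π / 2) ≤ θ)
    (h₂ : θ ≤ π / 2) (hθ : sin θ ≠ 0) :
    sin θ ^ 2 * ∑ i, c i * fTeoC i (1 / sin θ) = fTeoCAngle c θ := by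
  simp only [fTeoC, fTeoCAngle, Fin.sum_univ_five, Matrix.cons_val, one_div_one_div,
    arcsin_sin h₁ h₂, sin_two_mul]
  field_simp

theorem fTeoCAngle_eqOn_zero {c : Fin 5 → ℝ} {b : ℝ} (hb : 0 < b)
    (hc : ∀ x ∈ Set.Ioo (1 : ℝ) b, ∑ i, c i * fTeoC i x = 0) :
    Set.EqOn (fTeoCAngle c) 0 (Set.Ioo (arcsin (1 / b)) (π / 2)) := by
  intro θ hθ
  obtain ⟨hsin_gt, hsin_lt⟩ := sin_mem_Ioo_of_mem_Ioo_arcsin hθ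
  have hsin_pos : 0 < sin θ := (one_div_pos.2 hb).trans hsin_gt
  have hr : 1 / sin θ ∈ Set.Ioo (1 : ℝ) b :=
    ⟨one_lt_one_div hsin_pos hsin_lt, (one_div_lt hsin_pos hb).2 hsin_gt⟩
  rw [← sin_sq_mul_sum_fTeoC_one_div_sin c ((neg_pi_div_two_le_arcsin _).trans hθ.1.le)
    hθ.2.le hsin_pos.ne', hc _ hr, mul_zero, Pi.zero_apply]

theorem hasDerivAt_fTeoCAngle (c : Fin 5 → ℝ) {θ : ℝ} (hθ : sin θ ≠ 0) :
    HasDerivAt (fTeoCAngle c)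
      ((-c 0 + (2 * (c 1 - c 2) + c 3) * sin θ ^ 2 + (6 * c 4 - 2 * c 3) * sin θ ^ 4
        + -(8 * c 4) * sin θ ^ 6) / sin θ ^ 2) θ := by
  have hsin := hasDerivAt_sin θ
  have hcos := hasDerivAt_cos θ
  have hid := hasDerivAt_id θ
  have := ((((hcos.div hsin hθ).const_mul (c 0)).add
    (((hid.const_mul 2).const_add π).const_mul (c 1))).add
    (((hid.const_mul 2).const_sub π).const_mul (c 2))).add
    ((hsin.mul hcos).const_mul (c 3)) |>.add
    ((((hsin.pow 3).const_mul 2).mul hcos).const_mul (c 4))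
  refine (this.congr_deriv ?_).congr_of_eventuallyEq (.of_forall fun _ => rfl)
  simp only [Pi.pow_apply, Nat.cast_ofNat]
  field_simp
  linear_combination (-c 0 + c 3 * sin θ ^ 2 + 6 * c 4 * sin θ ^ 4) * sin_sq_add_cos_sq θ

theorem fTeoCAngle_deriv_numerator_eq_zero {c : Fin 5 → ℝ} {a : ℝ} (ha : 0 ≤ a)
    (hF : Set.EqOn (fTeoCAngle c) 0 (Set.Ioo (arcsin a) (π / 2))) :
    ∀ u ∈ Set.Ioo a 1, -c 0 + (2 * (c 1 - c 2) + c 3) * u ^ 2 + (6 * c 4 - 2 * c 3) * u ^ 4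
      + -(8 * c 4) * u ^ 6 = 0 := by
  intro u hu
  have hu_pos : 0 < u := ha.trans_lt hu.1
  have hsin : sin (arcsin u) = u := sin_arcsin (by linarith) hu.2.le
  have hF_nhds : fTeoCAngle c =ᶠ[nhds (arcsin u)] 0 :=
    Filter.eventuallyEq_of_mem (isOpen_Ioo.mem_nhds (arcsin_mem_Ioo_arcsin (by linarith) hu)) hF
  have hderiv := (hasDerivAt_fTeoCAngle c (θ := arcsin u) (by rw [hsin]; exact hu_pos.ne')).unique
    ((hasDerivAt_const _ 0).congr_of_eventuallyEq hF_nhds)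
  rw [hsin, div_eq_zero_iff] at hderiv
  exact hderiv.resolve_right (by positivity)

/-- The five functions are linearly independent on `(1, 3)`. -/
theorem lin_indep_teoC :
    ∀ c : Fin 5 → ℝ,
      (∀ x ∈ Set.Ioo (1 : ℝ) 3, ∑ i, c i * fTeoC i x = 0) → ∀ i, c i = 0 := by
  intro c hc
  have hF := fTeoCAngle_eqOn_zero (by norm_num) hc
  obtain ⟨h0, h1, h2, h3⟩ := even_sextic_coeffs_eq_zero (Set.Ioo_infinite (by norm_num))
    (fTeoCAngle_deriv_numerator_eq_zero (by norm_num) hF)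
  have hc0 : c 0 = 0 := neg_eq_zero.1 h0
  have hc4 : c 4 = 0 := by linarith
  have hc3 : c 3 = 0 := by linarith
  have hc12 : c 1 = c 2 := by linarith
  obtain ⟨θ, hθ⟩ : (Set.Ioo (arcsin (1 / 3)) (π / 2)).Nonempty :=
    Set.nonempty_Ioo.2 (arcsin_lt_pi_div_two.2 (by norm_num))
  have hπ := hF hθ
  rw [fTeoCAngle, hc0, hc3, hc4, hc12, Pi.zero_apply] at hπ
  have hc2 : c 2 = 0 :=
    (mul_eq_zero.1 (by linear_combination hπ / 2 : c 2 * π = 0)).resolve_right pi_ne_zero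
  intro i
  fin_cases i
  exacts [hc0, hc12.trans hc2, hc2, hc3, hc4]
end
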